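/- Let n ≥ 2 and let v, w ∈ S_n be such that there exist subsets {i_1,…,i_r} and {j_1,…,j_s} of [n−1] with |i_h − j_l| > 1 for all h ∈ [r] and l ∈ [s], with v in the subgroup generated by s_{i_1},…,s_{i_r} and w in the subgroup generated by s_{j_1},…,s_{j_s}. If some Plücker relation degenerates to a monomial on X_v, or some Plücker relation degenerates to a monomial on X_w, then some Plücker relation degenerates to a monomial on X_{v∘w}. -/

import Mathlib

open Finset MvPolynomial

namespace DegSchubert

/-- The interval `[d] = {1,…,d}` (empty for `d = 0`). -/
def seg (d : ℕ) : Finset ℕ := Finset.Icc 1 d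

/-- Number of inversions of a list of naturals. -/
def inv : List ℕ → ℕ
  | [] => 0
  | a :: t => t.countP (fun b => decide (b < a)) + inv t

/-- Signed Plücker variable attached to a sequence: zero if two entries coincide,
otherwise the sign of the sorting permutation times the variable of the underlying set. -/
noncomputable def pseq (l : List ℕ) : MvPolynomial (Finset ℕ) ℂ :=
  if l.Nodup then ((-1 : ℂ) ^ inv l) • X l.toFinset else 0

/-- `J′`: replace the first `k` entries of `J` by the entries of `L` in the (0-indexed)
positions belonging to `R`, taken in increasing order. -/
def Jrep (J L : List ℕ) (k : ℕ) (R : Finset ℕ) : List ℕ :=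
  (R.sort (· ≤ ·)).map (fun r => L.getD r 0) ++ J.drop k

/-- `L′`: replace the entries of `L` in the (0-indexed) positions belonging to `R`
by the first `k` entries of `J`, in order. -/
def Lrep (L J : List ℕ) (R : Finset ℕ) : List ℕ :=
  (List.range L.length).map
    (fun p => if p ∈ R then J.getD ((R.filter (· < p)).card) 0 else L.getD p 0)

/-- The Plücker relation `R^k_{J,L}` (positions of `L` are 0-indexed). -/
noncomputable def pluecker (k : ℕ) (J L : List ℕ) : MvPolynomial (Finset ℕ) ℂ :=
  pseq J * pseq L -
    ∑ R ∈ (Finset.range L.length).powersetCard k, pseq (Jrep J L k R) * pseq (Lrep L J R)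

/-- Validity of the data `(k, J, L)` of a Plücker relation for `S_n`. -/
def ValidPair (n k : ℕ) (J L : List ℕ) : Prop :=
  J.Nodup ∧ L.Nodup ∧ (∀ a ∈ J, a ∈ seg n) ∧ (∀ a ∈ L, a ∈ seg n) ∧
    1 ≤ J.length ∧ J.length ≤ L.length ∧ L.length ≤ n - 1 ∧ 1 ≤ k ∧ k ≤ J.length

/-- Weight of a Plücker variable. -/
def wt (n : ℕ) (I : Finset ℕ) : ℕ := (I.filter (fun r => I.card ≤ r ∧ r ≤ n - 1)).card

/-- Weight of a monomial. -/
def mwt (n : ℕ) (m : Finset ℕ →₀ ℕ) : ℕ := m.sum (fun I e => e * wt n I)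

/-- The initial form of a polynomial: the sum of its terms of minimal weight. -/
noncomputable def initw (n : ℕ) (f : MvPolynomial (Finset ℕ) ℂ) : MvPolynomial (Finset ℕ) ℂ :=
  ∑ m ∈ f.support.filter (fun m => ∀ m' ∈ f.support, mwt n m ≤ mwt n m'),
    monomial m (f.coeff m)

/-- The componentwise ("dominance") order on finsets of naturals of equal size. -/
def domLE (A B : Finset ℕ) : Prop :=
  List.Forall₂ (· ≤ ·) (A.sort (· ≤ ·)) (B.sort (· ≤ ·))

/-- Valid index sets for Plücker variables. -/
def ValidIndex (n : ℕ) (I : Finset ℕ) : Prop :=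
  I.Nonempty ∧ I ⊆ seg n ∧ I.card ≤ n - 1

/-- The ideal generated by the Plücker variables vanishing on the Schubert variety `X_w`. -/
noncomputable def vanishIdeal (n : ℕ) (w : Equiv.Perm ℕ) : Ideal (MvPolynomial (Finset ℕ) ℂ) :=
  Ideal.span { f | ∃ I : Finset ℕ, ValidIndex n I ∧ ¬ domLE I ((seg I.card).image ⇑w) ∧ f = X I }

/-- The set of Plücker relations. -/
def plueckerSet (n : ℕ) : Set (MvPolynomial (Finset ℕ) ℂ) :=
  { f | ∃ k J L, ValidPair n k J L ∧ f = pluecker k J L }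

/-- The set of initial forms of the Plücker relations. -/
def initPlueckerSet (n : ℕ) : Set (MvPolynomial (Finset ℕ) ℂ) :=
  { f | ∃ k J L, ValidPair n k J L ∧ f = initw n (pluecker k J L) }

/-- The Schubert ideal `I_w`. -/
noncomputable def schubIdeal (n : ℕ) (w : Equiv.Perm ℕ) : Ideal (MvPolynomial (Finset ℕ) ℂ) :=
  Ideal.span (plueckerSet n) ⊔ vanishIdeal n w

/-- The degenerate Schubert ideal `J^a_w`. -/
noncomputable def degIdeal (n : ℕ) (w : Equiv.Perm ℕ) : Ideal (MvPolynomial (Finset ℕ) ℂ) :=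
  Ideal.span (initPlueckerSet n) ⊔ vanishIdeal n w

/-- `J^a_w` contains a product of two Plücker variables. -/
def ContainsDeg2Mono (n : ℕ) (w : Equiv.Perm ℕ) : Prop :=
  ∃ A B : Finset ℕ, ValidIndex n A ∧ ValidIndex n B ∧ X A * X B ∈ degIdeal n w

/-- `u^{i,j} = #{a ∈ [i] : u(a) ≥ j}`. -/
def uij (u : Equiv.Perm ℕ) (i j : ℕ) : ℕ := ((seg i).filter (fun a => j ≤ u a)).card

/-- Bruhat order on `S_n`. -/
def bruhatLE (n : ℕ) (v u : Equiv.Perm ℕ) : Prop :=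
  ∀ i ∈ seg n, ∀ j ∈ seg n, uij v i j ≤ uij u i j

/-- The Plücker relation `R^k_{J,L}` degenerates to a monomial on `X_u`: the image of its
initial form in the quotient by the vanishing Plücker variables is a nonzero scalar multiple
of a single monomial. -/
def DegToMono (n : ℕ) (u : Equiv.Perm ℕ) (k : ℕ) (J L : List ℕ) : Prop :=
  ∃ (m : Finset ℕ →₀ ℕ) (a : ℂ),
    Ideal.Quotient.mk (vanishIdeal n u) (initw n (pluecker k J L)) =
      Ideal.Quotient.mk (vanishIdeal n u) (monomial m a) ∧
    Ideal.Quotient.mk (vanishIdeal n u) (monomial m a) ≠ 0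

/-- `F(K) ≤ u([#K])` for a sequence `K`. -/
def seqLE (u : Equiv.Perm ℕ) (K : List ℕ) : Prop :=
  domLE K.toFinset ((seg K.length).image ⇑u)

/-!
Write `N_u(c, x)` for the number of elements `≤ x` of `u([c])`; then `I ≤ u([#I])` iff
`N_u(#I, x) ≤ #{i ∈ I | i ≤ x}` for all `x`. A transposition `s_t` with `t ≠ x` maps `[0, x]` onto
itself, so by the separation hypothesis one of `v`, `w` does, for every `x`; moreover `v` and `w`
commute. This gives `N_{vw} ≤ N_v`, so every Plücker variable surviving on `X_v` survives on
`X_{vw}`. Every monomial of `R^k_{J,L}` is `p_P p_Q` with `P ⊎ Q = J ⊎ L`. If `p_P p_Q` is the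
monomial that survives on `X_v` and the variable `p_{P'}` of another monomial `p_{P'} p_{Q'}`
vanishes on `X_v`, witnessed at `x`, then `v` cannot preserve `[0, x]`: otherwise `P` and `Q`, hence also `P'` and `Q'`, would contain the maximal
possible number of elements `≤ x`. So `w` preserves `[0, x]` and `x` also witnesses that `p_{P'}`
vanishes on `X_{vw}`. Thus the initial form degenerates to the same monomial on `X_{vw}`; the case
of `w` follows from `vw = wv`.
-/

open Equiv
open scoped Pointwise

theorem countP_le_countP_of_forall₂_le {l₁ l₂ : List ℕ} (h : List.Forall₂ (· ≤ ·) l₁ l₂)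
    (x : ℕ) : l₂.countP (· ≤ x) ≤ l₁.countP (· ≤ x) := by
  induction h with
  | nil => simp
  | @cons a b t₁ t₂ hab _ ih =>
    simp only [List.countP_cons]
    by_cases hb : b ≤ x
    · simp [hb, hab.trans hb]; omega
    · simp [hb]; omega

theorem forall₂_le_of_countP_le : ∀ {l₁ l₂ : List ℕ}, l₁.Pairwise (· < ·) → l₂.Pairwise (· < ·) →
    l₁.length = l₂.length → (∀ x, l₂.countP (· ≤ x) ≤ l₁.countP (· ≤ x)) →
    List.Forall₂ (· ≤ ·) l₁ l₂
  | [], [], _, _, _, _ => .nil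
  | a :: t₁, b :: t₂, h₁, h₂, hlen, h => by
    rw [List.pairwise_cons] at h₁ h₂
    have hab : a ≤ b := by
      by_contra! hba
      have := h b
      simp only [List.countP_cons, le_refl, decide_true, if_true] at this
      have hzero : (a :: t₁).countP (· ≤ b) = 0 :=
        List.countP_eq_zero.mpr fun y hy => by
          rcases List.mem_cons.mp hy with rfl | hy
          · simpa using hba
          · simpa using hba.trans (h₁.1 y hy)
      rw [List.countP_cons] at hzero
      omega
    refine .cons hab (forall₂_le_of_countP_le h₁.2 h₂.2 (by simpa using hlen) fun x => ?_)
    have := h x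
    simp only [List.countP_cons] at this
    by_cases hb : b ≤ x
    · simp [hb, hab.trans hb] at this; omega
    · have : t₂.countP (· ≤ x) = 0 :=
        List.countP_eq_zero.mpr fun y hy => by simpa using (lt_of_not_ge hb).trans (h₂.1 y hy)
      omega

def lowCount (C : Finset ℕ) (x : ℕ) : ℕ := #{c ∈ C | c ≤ x}

theorem lowCount_eq_countP_sort (C : Finset ℕ) (x : ℕ) :
    lowCount C x = (C.sort (· ≤ ·)).countP (· ≤ x) := by
  rw [lowCount, card_def, filter_val, ← sort_eq C (· ≤ ·), Multiset.filter_coe,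
    Multiset.coe_card, List.countP_eq_length_filter]

theorem domLE_iff_lowCount_le {C D : Finset ℕ} (h : #C = #D) :
    domLE C D ↔ ∀ x, lowCount D x ≤ lowCount C x := by
  simp only [domLE, lowCount_eq_countP_sort]
  exact ⟨countP_le_countP_of_forall₂_le, forall₂_le_of_countP_le (sortedLT_sort C).pairwise
    (sortedLT_sort D).pairwise (by simp [h])⟩

theorem lowCount_seg (c x : ℕ) : lowCount (seg c) x = min c x := by
  have : {y ∈ seg c | y ≤ x} = Icc 1 (min c x) := by
    ext y; simp [seg]; omega
  rw [lowCount, this, Nat.card_Icc]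
  omega

theorem lowCount_le_min {S : Finset ℕ} (hS : ∀ y ∈ S, 0 < y) (x : ℕ) :
    lowCount S x ≤ min #S x := by
  refine le_min (card_filter_le _ _) ?_
  calc lowCount S x ≤ #(Icc 1 x) := card_le_card fun y hy => by
        simp only [mem_filter] at hy
        have := hS y hy.1
        simp only [mem_Icc]
        omega
    _ = x := by simp

theorem lowCount_add_lowCount {P Q P' Q' : Finset ℕ} (h : P.val + Q.val = P'.val + Q'.val)
    (x : ℕ) : lowCount P x + lowCount Q x = lowCount P' x + lowCount Q' x := by
  simp only [lowCount, card_def, filter_val, ← Multiset.card_add, ← Multiset.filter_add, h]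

theorem card_image_seg (u : Perm ℕ) (c : ℕ) : #((seg c).image u) = c := by
  simp [card_image_of_injective _ u.injective, seg]

theorem apply_le_iff_of_mem_stabilizer {u : Perm ℕ} {x : ℕ}
    (hu : u ∈ MulAction.stabilizer (Perm ℕ) (Set.Iic x)) (y : ℕ) : u y ≤ x ↔ y ≤ x := by
  have := Set.smul_mem_smul_set_iff (a := u) (s := Set.Iic x) (x := y)
  rwa [MulAction.mem_stabilizer_iff.mp hu] at this

theorem lowCount_image_of_mem_stabilizer {u : Perm ℕ} {x : ℕ}
    (hu : u ∈ MulAction.stabilizer (Perm ℕ) (Set.Iic x)) (S : Finset ℕ) :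
    lowCount (S.image u) x = lowCount S x := by
  rw [lowCount, filter_image, card_image_of_injective _ u.injective]
  simp only [apply_le_iff_of_mem_stabilizer hu, lowCount]

theorem swap_succ_mem_stabilizer_Iic {t x : ℕ} (h : t ≠ x) :
    swap t (t + 1) ∈ MulAction.stabilizer (Perm ℕ) (Set.Iic x) := by
  rw [MulAction.mem_stabilizer_iff]
  ext y
  rw [Set.mem_smul_set_iff_inv_smul_mem, swap_inv, Perm.smul_def, swap_apply_def]
  simp only [Set.mem_Iic]
  split_ifs <;> omega

theorem mem_stabilizer_Iic_of_mem_closure {C : Set ℕ} {u : Perm ℕ}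
    (hu : u ∈ Subgroup.closure ((fun t => swap t (t + 1)) '' C)) {x : ℕ} (hx : x ∉ C) :
    u ∈ MulAction.stabilizer (Perm ℕ) (Set.Iic x) := by
  refine (Subgroup.closure_le _).mpr ?_ hu
  rintro _ ⟨t, ht, rfl⟩
  exact swap_succ_mem_stabilizer_Iic fun h => hx (h ▸ ht)

theorem apply_zero_of_mem_closure {C : Set ℕ} {u : Perm ℕ}
    (hu : u ∈ Subgroup.closure ((fun t => swap t (t + 1)) '' C)) (hC : 0 ∉ C) : u 0 = 0 := by
  simpa using apply_le_iff_of_mem_stabilizer (mem_stabilizer_Iic_of_mem_closure hu hC) 0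

theorem commute_of_mem_closure_swaps {A B : Set ℕ} {v w : Perm ℕ}
    (hsep : ∀ a ∈ A, ∀ b ∈ B, 1 < |(a : ℤ) - (b : ℤ)|)
    (hv : v ∈ Subgroup.closure ((fun t => swap t (t + 1)) '' A))
    (hw : w ∈ Subgroup.closure ((fun t => swap t (t + 1)) '' B)) : Commute v w := by
  have hA : Subgroup.closure ((fun t => swap t (t + 1)) '' A) ≤
      Subgroup.centralizer (Subgroup.closure ((fun t => swap t (t + 1)) '' B)) := by
    rw [Subgroup.centralizer_closure, Subgroup.closure_le]
    rintro _ ⟨a, ha, rfl⟩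
    rw [SetLike.mem_coe, Subgroup.mem_centralizer_iff]
    rintro _ ⟨b, hb, rfl⟩
    have := hsep a ha b hb
    refine (Perm.disjoint_swap_swap ?_).commute.eq
    simp only [List.nodup_cons, List.mem_cons, List.not_mem_nil, List.nodup_nil, or_false,
      not_false_eq_true, and_true]
    rw [lt_abs] at this
    omega
  exact ((Subgroup.mem_centralizer_iff.mp (hA hv)) w hw).symm

theorem mem_ideal_span_X_image_iff_coeff {σ R : Type*} [CommSemiring R] {s : Set σ}
    {f : MvPolynomial σ R} :
    f ∈ Ideal.span (X '' s) ↔ ∀ m : σ →₀ ℕ, (∀ i ∈ s, m i = 0) → coeff m f = 0 := by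
  rw [mem_ideal_span_X_image]
  refine ⟨fun h m hm => ?_, fun h m hm => ?_⟩
  · by_contra hc
    obtain ⟨i, hi, hmi⟩ := h m (mem_support_iff.mpr hc)
    exact hmi (hm i hi)
  · by_contra! hc
    exact mem_support_iff.mp hm (h m hc)

theorem sub_monomial_mem_span_X_and_monomial_notMem_iff {σ R : Type*} [CommRing R] {s : Set σ}
    {f : MvPolynomial σ R} {m : σ →₀ ℕ} {a : R} :
    (f - monomial m a ∈ Ideal.span (X '' s) ∧ monomial m a ∉ Ideal.span (X '' s)) ↔
    a ≠ 0 ∧ (∀ i ∈ s, m i = 0) ∧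
      ∀ m' : σ →₀ ℕ, (∀ i ∈ s, m' i = 0) → coeff m' f = coeff m' (monomial m a) := by
  simp only [mem_ideal_span_X_image_iff_coeff, coeff_sub, sub_eq_zero, not_forall]
  classical
  constructor
  · rintro ⟨hf, m', hm', hne⟩
    rw [coeff_monomial] at hne
    split_ifs at hne with h
    · subst h
      exact ⟨hne, hm', hf⟩
    · exact absurd rfl hne
  · rintro ⟨ha, hm, hf⟩
    exact ⟨hf, m, hm, by rwa [coeff_monomial, if_pos rfl]⟩

def vanishingIndices (n : ℕ) (u : Perm ℕ) : Set (Finset ℕ) :=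
  {I | ValidIndex n I ∧ ¬ domLE I ((seg #I).image u)}

theorem vanishIdeal_eq_span (n : ℕ) (u : Perm ℕ) :
    vanishIdeal n u = Ideal.span (X '' vanishingIndices n u) := by
  rw [vanishIdeal]
  congr 1
  ext f
  simp [vanishingIndices, eq_comm, and_assoc]

theorem degToMono_iff {n : ℕ} {u : Perm ℕ} {k : ℕ} {J L : List ℕ} :
    DegToMono n u k J L ↔ ∃ (m : Finset ℕ →₀ ℕ) (a : ℂ), a ≠ 0 ∧
      (∀ I ∈ vanishingIndices n u, m I = 0) ∧
      ∀ m' : Finset ℕ →₀ ℕ, (∀ I ∈ vanishingIndices n u, m' I = 0) →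
        coeff m' (initw n (pluecker k J L)) = coeff m' (monomial m a) := by
  simp only [DegToMono, Ideal.Quotient.eq, ne_eq, Ideal.Quotient.eq_zero_iff_mem,
    vanishIdeal_eq_span, sub_monomial_mem_span_X_and_monomial_notMem_iff]

theorem support_initw_subset (n : ℕ) (f : MvPolynomial (Finset ℕ) ℂ) :
    (initw n f).support ⊆ f.support := by
  intro m hm
  obtain ⟨m', hm', hm⟩ := mem_biUnion.mp (support_sum hm)
  rw [mem_singleton.mp (support_monomial_subset hm)]
  exact (mem_filter.mp hm').1

theorem mem_support_pseq_mul {M N : List ℕ} {m : Finset ℕ →₀ ℕ}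
    (hm : m ∈ (pseq M * pseq N).support) :
    M.Nodup ∧ N.Nodup ∧ m = Finsupp.single M.toFinset 1 + Finsupp.single N.toFinset 1 := by
  unfold pseq at hm
  split_ifs at hm with hM hN
  · refine ⟨hM, hN, ?_⟩
    rw [smul_mul_smul_comm, X, X, monomial_mul, one_mul, smul_monomial] at hm
    simpa using support_monomial_subset hm
  all_goals simp at hm

theorem map_getD_range {l : List ℕ} {k : ℕ} (hk : k ≤ l.length) :
    (List.range k).map (l.getD · 0) = l.take k := by
  apply List.ext_getElem (by simp; omega)
  intro i h _
  simp only [List.length_map, List.length_range] at h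
  simp only [List.getElem_map, List.getElem_range, List.getElem_take, List.getD_eq_getElem?_getD,
    List.getElem?_eq_getElem (show i < l.length by omega), Option.getD_some]

theorem map_card_filter_lt_val (R : Finset ℕ) :
    R.val.map (fun p => #{r ∈ R | r < p}) = (range #R).val := by
  have hmono : StrictMonoOn (fun p => #{r ∈ R | r < p}) R := fun p hp q hq hpq =>
    card_lt_card ((ssubset_iff_of_subset fun r hr => by
        simp only [mem_filter] at hr ⊢
        exact ⟨hr.1, hr.2.trans hpq⟩).mpr ⟨p, by simpa [hpq] using hp, by simp⟩)
  have himage : R.image (fun p => #{r ∈ R | r < p}) = range #R := by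
    refine eq_of_subset_of_card_le (fun i hi => ?_)
      (by rw [card_image_of_injOn hmono.injOn, card_range])
    obtain ⟨p, hp, rfl⟩ := mem_image.mp hi
    exact mem_range.mpr (card_lt_card (filter_ssubset.mpr ⟨p, hp, by simp⟩))
  rw [← himage, image_val_of_injOn hmono.injOn]

theorem coe_Jrep_add_coe_Lrep {J L : List ℕ} {k : ℕ} (hk : k ≤ J.length) {R : Finset ℕ}
    (hR : R ∈ (range L.length).powersetCard k) :
    (Jrep J L k R : Multiset ℕ) + (Lrep L J R : Multiset ℕ) = (J : Multiset ℕ) + L := by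
  obtain ⟨hRsub, hRcard⟩ := mem_powersetCard.mp hR
  have hrange : ∀ d, (range d).val = (List.range d : Multiset ℕ) := fun _ => rfl
  set rest := (range L.length).val.filter (· ∉ R)
  have hsplit : (range L.length).val = R.val + rest := by
    rw [← Multiset.filter_add_not (· ∈ R) (range L.length).val, ← filter_val,
      filter_mem_eq_inter, inter_eq_right.mpr hRsub]
  have hJ : (J : Multiset ℕ) = R.val.map (fun p => J.getD #{r ∈ R | r < p} 0) + J.drop k := by
    have hmap : R.val.map (fun p => J.getD #{r ∈ R | r < p} 0) =
        (R.val.map fun p => #{r ∈ R | r < p}).map (J.getD · 0) := by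
      rw [Multiset.map_map]
      rfl
    rw [hmap, map_card_filter_lt_val,
      hRcard, hrange, Multiset.map_coe, map_getD_range hk, Multiset.coe_add, List.take_append_drop]
  have hL : (L : Multiset ℕ) = R.val.map (L.getD · 0) + rest.map (L.getD · 0) := by
    rw [← Multiset.map_add, ← hsplit, hrange, Multiset.map_coe, map_getD_range le_rfl,
      List.take_length]
  have hLrep : (Lrep L J R : Multiset ℕ) =
      R.val.map (fun p => J.getD #{r ∈ R | r < p} 0) + rest.map (L.getD · 0) := by
    rw [Lrep, ← Multiset.map_coe, ← hrange, hsplit, Multiset.map_add]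
    congr 1 <;> refine Multiset.map_congr rfl fun p hp => ?_
    · rw [if_pos (mem_val.mp hp)]
    · rw [if_neg (Multiset.mem_filter.mp hp).2]
  have hJrep : (Jrep J L k R : Multiset ℕ) = R.val.map (L.getD · 0) + J.drop k := by
    rw [Jrep, ← Multiset.coe_add, ← Multiset.map_coe, sort_eq]
  rw [hJrep, hLrep, hJ, hL]
  abel

theorem exists_of_mem_support_pluecker {k : ℕ} {J L : List ℕ} (hk : k ≤ J.length)
    {m : Finset ℕ →₀ ℕ} (hm : m ∈ (pluecker k J L).support) :
    ∃ P Q : Finset ℕ, #P = J.length ∧ #Q = L.length ∧ P.val + Q.val = (J : Multiset ℕ) + L ∧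
      m = Finsupp.single P 1 + Finsupp.single Q 1 := by
  have key : ∀ M N : List ℕ, M.length = J.length → N.length = L.length →
      (M : Multiset ℕ) + N = J + L → m ∈ (pseq M * pseq N).support →
      ∃ P Q : Finset ℕ, #P = J.length ∧ #Q = L.length ∧
        P.val + Q.val = (J : Multiset ℕ) + L ∧ m = Finsupp.single P 1 + Finsupp.single Q 1 := by
    intro M N hMlen hNlen hval hmMN
    obtain ⟨hM, hN, rfl⟩ := mem_support_pseq_mul hmMN
    exact ⟨M.toFinset, N.toFinset, by rw [List.toFinset_card_of_nodup hM, hMlen],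
      by rw [List.toFinset_card_of_nodup hN, hNlen],
      by rw [List.toFinset_val, List.toFinset_val, hM.dedup, hN.dedup, hval], rfl⟩
  rcases mem_union.mp (support_sub _ _ _ hm) with h | h
  · exact key J L rfl rfl rfl h
  · obtain ⟨R, hR, h⟩ := mem_biUnion.mp (support_sum h)
    refine key _ _ ?_ (by simp [Lrep]) (coe_Jrep_add_coe_Lrep hk hR) h
    simp [Jrep, (mem_powersetCard.mp hR).2]
    omega

theorem validIndex_of_val_add_val {n k : ℕ} {J L : List ℕ} (hvp : ValidPair n k J L)
    {P Q : Finset ℕ} (hP : #P = J.length) (hQ : #Q = L.length)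
    (hval : P.val + Q.val = (J : Multiset ℕ) + L) : ValidIndex n P ∧ ValidIndex n Q := by
  obtain ⟨-, -, hJ, hL, hJ1, hJL, hLn, -, -⟩ := hvp
  have hmem : ∀ y ∈ P.val + Q.val, y ∈ seg n := by
    intro y hy
    rw [hval, Multiset.mem_add] at hy
    exact hy.elim (hJ y) (hL y)
  exact ⟨⟨card_pos.mp (by omega), fun y hy => hmem y (Multiset.mem_add.mpr (.inl hy)), by omega⟩,
    ⟨card_pos.mp (by omega), fun y hy => hmem y (Multiset.mem_add.mpr (.inr hy)), by omega⟩⟩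

section TwoCommutingPermutations

variable {v w : Perm ℕ}

theorem lowCount_image_mul_of_mem_stabilizer (hcomm : Commute v w) {x : ℕ}
    (hw : w ∈ MulAction.stabilizer (Perm ℕ) (Set.Iic x)) (S : Finset ℕ) :
    lowCount (S.image (v * w)) x = lowCount (S.image v) x := by
  rw [hcomm.eq, Perm.coe_mul, ← image_image, lowCount_image_of_mem_stabilizer hw]

variable (hcomm : Commute v w)
  (hstab : ∀ x : ℕ, v ∈ MulAction.stabilizer (Perm ℕ) (Set.Iic x) ∨
    w ∈ MulAction.stabilizer (Perm ℕ) (Set.Iic x))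
include hcomm hstab

theorem lowCount_image_mul_le (h0 : (v * w) 0 = 0) (c x : ℕ) :
    lowCount ((seg c).image (v * w)) x ≤ lowCount ((seg c).image v) x := by
  rcases hstab x with hv | hw
  · have hpos : ∀ y ∈ (seg c).image (v * w), 0 < y := by
      simp only [mem_image, seg, mem_Icc]
      rintro _ ⟨y, hy, rfl⟩
      refine Nat.pos_of_ne_zero fun h => ?_
      have := (v * w).injective (h.trans h0.symm)
      omega
    calc _ ≤ min c x := (lowCount_le_min hpos x).trans_eq (by rw [card_image_seg])
      _ = _ := by rw [lowCount_image_of_mem_stabilizer hv, lowCount_seg]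
  · exact (lowCount_image_mul_of_mem_stabilizer hcomm hw _).le

theorem domLE_image_mul (h0 : (v * w) 0 = 0) {I : Finset ℕ}
    (h : domLE I ((seg #I).image v)) : domLE I ((seg #I).image (v * w)) := by
  rw [domLE_iff_lowCount_le (card_image_seg _ _).symm] at h ⊢
  exact fun x => (lowCount_image_mul_le hcomm hstab h0 _ x).trans (h x)

theorem not_domLE_image_mul {P Q P' Q' : Finset ℕ} (hval : P.val + Q.val = P'.val + Q'.val)
    (hcard : #P = #P') (hP' : ∀ y ∈ P', 0 < y) (hQ' : ∀ y ∈ Q', 0 < y)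
    (hP : domLE P ((seg #P).image v)) (hQ : domLE Q ((seg #Q).image v))
    (h : ¬ domLE P' ((seg #P').image v)) : ¬ domLE P' ((seg #P').image (v * w)) := by
  rw [domLE_iff_lowCount_le (card_image_seg _ _).symm] at h hP hQ ⊢
  push Not at h ⊢
  obtain ⟨x, hx⟩ := h
  refine ⟨x, ?_⟩
  rcases hstab x with hv | hw
  · have hQcard : #Q = #Q' := by
      have := congrArg Multiset.card hval
      simp only [Multiset.card_add, ← card_def] at this
      omega
    have := lowCount_add_lowCount hval x
    have := hP x
    have := hQ x
    have := lowCount_le_min hP' x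
    have := lowCount_le_min hQ' x
    simp only [lowCount_image_of_mem_stabilizer hv, lowCount_seg] at *
    omega
  · rwa [lowCount_image_mul_of_mem_stabilizer hcomm hw]

theorem vanishingIndices_mul_subset (h0 : (v * w) 0 = 0) (n : ℕ) :
    vanishingIndices n (v * w) ⊆ vanishingIndices n v :=
  fun _ ⟨hI, hdom⟩ => ⟨hI, fun h => hdom (domLE_image_mul hcomm hstab h0 h)⟩

theorem mem_vanishingIndices_mul_of_mem_support {n k : ℕ} {J L : List ℕ}
    (hvp : ValidPair n k J L) {m m' : Finset ℕ →₀ ℕ} (hm : m ∈ (pluecker k J L).support)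
    (hm' : m' ∈ (pluecker k J L).support) (halive : ∀ I ∈ vanishingIndices n v, m I = 0)
    {I : Finset ℕ} (hI : I ∈ vanishingIndices n v) (hm'I : m' I ≠ 0) :
    I ∈ vanishingIndices n (v * w) := by
  have hk : k ≤ J.length := hvp.2.2.2.2.2.2.2.2
  obtain ⟨P, Q, hP, hQ, hval, rfl⟩ := exists_of_mem_support_pluecker hk hm
  obtain ⟨P', Q', hP', hQ', hval', rfl⟩ := exists_of_mem_support_pluecker hk hm'
  obtain ⟨hPvalid, hQvalid⟩ := validIndex_of_val_add_val hvp hP hQ hval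
  obtain ⟨hP'valid, hQ'valid⟩ := validIndex_of_val_add_val hvp hP' hQ' hval'
  have hPdom : domLE P ((seg #P).image v) :=
    not_not.mp fun h => by simpa using halive P ⟨hPvalid, h⟩
  have hQdom : domLE Q ((seg #Q).image v) :=
    not_not.mp fun h => by simpa using halive Q ⟨hQvalid, h⟩
  have hpos : ∀ X, ValidIndex n X → ∀ y ∈ X, 0 < y := fun X hX y hy => by
    have := hX.2.1 hy
    simp only [seg, mem_Icc] at this
    omega
  refine ⟨hI.1, ?_⟩
  have hI' : I = P' ∨ I = Q' := by
    by_contra! h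
    simp [Ne.symm h.1, Ne.symm h.2] at hm'I
  rcases hI' with rfl | rfl
  · exact not_domLE_image_mul hcomm hstab (hval.trans hval'.symm) (hP.trans hP'.symm)
      (hpos _ hP'valid) (hpos _ hQ'valid) hPdom hQdom hI.2
  · exact not_domLE_image_mul hcomm hstab (by rw [add_comm, hval, ← hval', add_comm])
      (hQ.trans hQ'.symm) (hpos _ hQ'valid) (hpos _ hP'valid) hQdom hPdom hI.2

theorem degToMono_mul (h0 : (v * w) 0 = 0) {n k : ℕ} {J L : List ℕ} (hvp : ValidPair n k J L)
    (h : DegToMono n v k J L) : DegToMono n (v * w) k J L := by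
  rw [degToMono_iff] at h ⊢
  obtain ⟨m, a, ha, hm, hcoeff⟩ := h
  refine ⟨m, a, ha, fun I hI => hm I (vanishingIndices_mul_subset hcomm hstab h0 n hI),
    fun m' hm' => ?_⟩
  by_cases hv' : ∀ I ∈ vanishingIndices n v, m' I = 0
  · exact hcoeff m' hv'
  push Not at hv'
  obtain ⟨I, hI, hm'I⟩ := hv'
  have hne : m ≠ m' := fun h => hm'I (h ▸ hm I hI)
  rw [coeff_monomial, if_neg hne]
  by_contra hc
  have hmF : m ∈ (pluecker k J L).support := support_initw_subset n _ <|
    mem_support_iff.mpr (by rw [hcoeff m hm, coeff_monomial, if_pos rfl]; exact ha)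
  have hm'F : m' ∈ (pluecker k J L).support := support_initw_subset n _ (mem_support_iff.mpr hc)
  exact hm'I (hm' I (mem_vanishingIndices_mul_of_mem_support hcomm hstab hvp hmF hm'F hm hI hm'I))

end TwoCommutingPermutations

theorem stmt_16_general (n : ℕ) (v w : Equiv.Perm ℕ)
    (A B : Finset ℕ) (hA : A ⊆ seg (n - 1)) (hB : B ⊆ seg (n - 1))
    (hsep : ∀ a ∈ A, ∀ b ∈ B, 1 < |(a : ℤ) - (b : ℤ)|)
    (hv : v ∈ Subgroup.closure ((fun t => Equiv.swap t (t + 1)) '' (A : Set ℕ)))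
    (hw : w ∈ Subgroup.closure ((fun t => Equiv.swap t (t + 1)) '' (B : Set ℕ)))
    (hmono : (∃ k J L, ValidPair n k J L ∧ DegToMono n v k J L) ∨
             (∃ k J L, ValidPair n k J L ∧ DegToMono n w k J L)) :
    ∃ k J L, ValidPair n k J L ∧ DegToMono n (v * w) k J L := by
  have hcomm : Commute v w := commute_of_mem_closure_swaps hsep hv hw
  have hstab : ∀ x : ℕ, v ∈ MulAction.stabilizer (Perm ℕ) (Set.Iic x) ∨
      w ∈ MulAction.stabilizer (Perm ℕ) (Set.Iic x) := by
    intro x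
    by_cases hx : x ∈ A
    · exact .inr (mem_stabilizer_Iic_of_mem_closure hw fun hxB => by simpa using hsep x hx x hxB)
    · exact .inl (mem_stabilizer_Iic_of_mem_closure hv hx)
  have h0 : (v * w) 0 = 0 := by
    rw [Perm.mul_apply, apply_zero_of_mem_closure hw fun h => by simpa [seg] using hB h,
      apply_zero_of_mem_closure hv fun h => by simpa [seg] using hA h]
  rcases hmono with ⟨k, J, L, hvp, h⟩ | ⟨k, J, L, hvp, h⟩
  · exact ⟨k, J, L, hvp, degToMono_mul hcomm hstab h0 hvp h⟩
  · rw [hcomm.eq] at h0 ⊢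
    exact ⟨k, J, L, hvp, degToMono_mul hcomm.symm (fun x => (hstab x).symm) h0 hvp h⟩

/-- if some Plücker relation degenerates to a monomial on `X_v` or on `X_w`,
then some Plücker relation degenerates to a monomial on `X_{vw}`. -/
theorem stmt_16 (n : ℕ) (hn : 2 ≤ n) (v w : Equiv.Perm ℕ)
    (A B : Finset ℕ) (hA : A ⊆ seg (n - 1)) (hB : B ⊆ seg (n - 1))
    (hsep : ∀ a ∈ A, ∀ b ∈ B, 1 < |(a : ℤ) - (b : ℤ)|)
    (hv : v ∈ Subgroup.closure ((fun t => Equiv.swap t (t + 1)) '' (A : Set ℕ)))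
    (hw : w ∈ Subgroup.closure ((fun t => Equiv.swap t (t + 1)) '' (B : Set ℕ)))
    (hmono : (∃ k J L, ValidPair n k J L ∧ DegToMono n v k J L) ∨
             (∃ k J L, ValidPair n k J L ∧ DegToMono n w k J L)) :
    ∃ k J L, ValidPair n k J L ∧ DegToMono n (v * w) k J L :=
  stmt_16_general n v w A B hA hB hsep hv hw hmono

end DegSchubert
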